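/- Let Γ be a Fuchsian group (discrete subgroup of PSL₂(ℝ)) whose stabilizer of i ∈ ℍ is trivial. For A ∈ Γ \ {1}, write H_i(A) = {z ∈ ℍ : d_ℍ(z, i) ≤ d_ℍ(z, A·i)}, and for S ⊆ Γ let Ω(S) = ⋂_{A ∈ S, A ≠ 1} H_i(A). For a > 0 let Γᵃ be the set of elements of Γ of Frobenius norm at most a. Then for every a ≥ √2, Ω(Γ) ∩ B(i, log ν(a)) = Ω(Γᵃ) ∩ B(i, log ν(a)), where B(i, r) is the open hyperbolic ball of center i and radius r, and ν(a) = √((a² + √(a⁴ − 4))/2). -/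

import Mathlib

open UpperHalfPlane

/-- The Frobenius norm of a real 2×2 matrix: `‖A‖ = √(tr(AᵀA))`. -/
noncomputable def frobNorm (A : Matrix (Fin 2) (Fin 2) ℝ) : ℝ :=
  Real.sqrt (Matrix.trace (A.transpose * A))

/-- The function `ν(a) = √((a² + √(a⁴ − 4))/2)`. -/
noncomputable def nu (a : ℝ) : ℝ := Real.sqrt ((a ^ 2 + Real.sqrt (a ^ 4 - 4)) / 2)

/-- `SL₂(ℝ)` carries the subspace topology from the space of 2×2 real matrices. -/
instance : TopologicalSpace (Matrix.SpecialLinearGroup (Fin 2) ℝ) :=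
  TopologicalSpace.induced (fun A => A.1) inferInstance

/-- `Ω(S)`: the intersection, over nonidentity `A ∈ S`, of the closed half-planes
`H_i(A) = {z ∈ ℍ : d(z,i) ≤ d(z, A·i)}`. -/
def Omega (S : Set (Matrix.SpecialLinearGroup (Fin 2) ℝ)) : Set ℍ :=
  {z : ℍ | ∀ A ∈ S, A ≠ 1 → dist z UpperHalfPlane.I ≤ dist z (A • UpperHalfPlane.I)}

/-- `Γᵃ`: the set of elements of `Γ` of Frobenius norm at most `a`. -/
def normBdd (Γ : Subgroup (Matrix.SpecialLinearGroup (Fin 2) ℝ)) (a : ℝ) :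
    Set (Matrix.SpecialLinearGroup (Fin 2) ℝ) :=
  {A | A ∈ Γ ∧ frobNorm A.1 ≤ a}

/-!
For `A ∈ SL₂(ℝ)` one has `cosh d(i, A·i) = ‖A‖² / 2`, and `ν(a)` is chosen so that
`cosh (2 log ν(a)) = a² / 2`. Hence every `A` with `‖A‖ > a` moves `i` by more than
`2 log ν(a)`, and by the triangle inequality every point of `B(i, log ν(a))` is strictly closer
to `i` than to `A·i`. So inside that ball the half-planes `H_i(A)` with `‖A‖ > a` impose no
constraint, and `Ω(Γ)` and `Ω(Γᵃ)` agree there.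
-/

lemma frobNorm_sq (M : Matrix (Fin 2) (Fin 2) ℝ) :
    frobNorm M ^ 2 = M 0 0 ^ 2 + M 0 1 ^ 2 + M 1 0 ^ 2 + M 1 1 ^ 2 := by
  have htrace : (M.transpose * M).trace = M 0 0 ^ 2 + M 0 1 ^ 2 + M 1 0 ^ 2 + M 1 1 ^ 2 := by
    simp only [Matrix.trace_fin_two, Matrix.mul_apply, Fin.sum_univ_two, Matrix.transpose_apply]
    ring
  rw [frobNorm, htrace, Real.sq_sqrt (by positivity)]

namespace UpperHalfPlane

lemma cosh_dist_I (w : ℍ) :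
    Real.cosh (dist I w) = (Complex.normSq (w : ℂ) + 1) / (2 * w.im) := by
  rw [cosh_dist, Complex.dist_eq, ← Complex.normSq_eq_norm_sq, Complex.normSq_apply,
    Complex.normSq_apply]
  have hw := w.im_pos
  simp only [Complex.sub_re, Complex.sub_im, coe_I, Complex.I_re, Complex.I_im, I_im, coe_re, coe_im]
  field_simp
  ring

lemma coe_smul_I (A : Matrix.SpecialLinearGroup (Fin 2) ℝ) :
    ((A • I : ℍ) : ℂ) = (A 0 1 + A 0 0 * Complex.I) / (A 1 1 + A 1 0 * Complex.I) := by
  simp [coe_specialLinearGroup_apply, add_comm]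

lemma cosh_dist_I_smul_I (A : Matrix.SpecialLinearGroup (Fin 2) ℝ) :
    Real.cosh (dist I (A • I)) = frobNorm A.1 ^ 2 / 2 := by
  have hdet : A 0 0 * A 1 1 - A 0 1 * A 1 0 = 1 := by
    rw [← Matrix.det_fin_two, A.det_coe]
  -- Lagrange: `(α² + β²)(γ² + δ²) = (αδ - βγ)² + (αγ + βδ)²`
  have hpos : 0 < A 1 1 ^ 2 + A 1 0 ^ 2 := by
    nlinarith [sq_nonneg (A 0 0 * A 1 0 + A 0 1 * A 1 1), sq_nonneg (A 0 0), sq_nonneg (A 0 1)]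
  have hnormSq : Complex.normSq ((A • I : ℍ) : ℂ) =
      (A 0 1 ^ 2 + A 0 0 ^ 2) / (A 1 1 ^ 2 + A 1 0 ^ 2) := by
    rw [coe_smul_I, Complex.normSq_div, Complex.normSq_add_mul_I, Complex.normSq_add_mul_I]
  have him : (A • I).im = 1 / (A 1 1 ^ 2 + A 1 0 ^ 2) := by
    rw [← coe_im, coe_smul_I, Complex.div_im, Complex.normSq_add_mul_I]
    simp only [Complex.add_re, Complex.add_im, Complex.mul_re, Complex.mul_im, Complex.ofReal_re,
      Complex.ofReal_im, Complex.I_re, Complex.I_im]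
    field_simp
    linear_combination hdet
  rw [cosh_dist_I, hnormSq, him, frobNorm_sq]
  field_simp
  ring

end UpperHalfPlane

lemma cosh_two_mul_log_nu {a : ℝ} (ha : 2 ≤ a ^ 2) :
    Real.cosh (2 * Real.log (nu a)) = a ^ 2 / 2 := by
  have hsqrt := Real.sq_sqrt (show 0 ≤ a ^ 4 - 4 by nlinarith)
  have hnu : nu a ^ 2 = (a ^ 2 + Real.sqrt (a ^ 4 - 4)) / 2 := Real.sq_sqrt (by positivity)
  have hpos : 0 < nu a ^ 2 := by rw [hnu]; positivity
  rw [← Nat.cast_two, ← Real.log_pow, Real.cosh_log hpos, hnu]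
  field_simp
  linear_combination 2 * hsqrt

lemma two_mul_log_nu_lt_dist_I_smul_I {a : ℝ} (ha : Real.sqrt 2 ≤ a)
    {A : Matrix.SpecialLinearGroup (Fin 2) ℝ} (hA : a < frobNorm A.1) :
    2 * Real.log (nu a) < dist I (A • I) := by
  have ha0 : 0 ≤ a := (Real.sqrt_nonneg 2).trans ha
  have hcosh : Real.cosh (2 * Real.log (nu a)) < Real.cosh (dist I (A • I)) := by
    rw [cosh_two_mul_log_nu ((Real.sqrt_le_left ha0).mp ha), cosh_dist_I_smul_I]
    gcongr
  calc 2 * Real.log (nu a) ≤ |2 * Real.log (nu a)| := le_abs_self _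
    _ < |dist I (A • I)| := Real.cosh_lt_cosh.mp hcosh
    _ = dist I (A • I) := abs_of_nonneg dist_nonneg

lemma dist_lt_dist_of_mem_ball_of_two_mul_lt {X : Type*} [PseudoMetricSpace X] {x y z : X}
    {r : ℝ} (hz : z ∈ Metric.ball x r) (hxy : 2 * r < dist x y) : dist z x < dist z y := by
  rw [Metric.mem_ball] at hz
  linarith [dist_triangle_left x y z]

lemma omega_anti {S T : Set (Matrix.SpecialLinearGroup (Fin 2) ℝ)} (h : S ⊆ T) :
    Omega T ⊆ Omega S :=
  fun _ hz A hA => hz A (h hA)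

theorem omega_inter_ball_eq_general (Γ : Subgroup (Matrix.SpecialLinearGroup (Fin 2) ℝ))
    (a : ℝ) (ha : Real.sqrt 2 ≤ a) :
    Omega Γ ∩ Metric.ball UpperHalfPlane.I (Real.log (nu a)) =
      Omega (normBdd Γ a) ∩ Metric.ball UpperHalfPlane.I (Real.log (nu a)) := by
  refine subset_antisymm (Set.inter_subset_inter_left _ (omega_anti fun A hA => hA.1)) ?_
  rintro z ⟨hz, hball⟩
  refine ⟨fun A hA hA1 => ?_, hball⟩
  by_cases hle : frobNorm A.1 ≤ a
  · exact hz A ⟨hA, hle⟩ hA1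
  · exact (dist_lt_dist_of_mem_ball_of_two_mul_lt hball
      (two_mul_log_nu_lt_dist_I_smul_I ha (not_le.mp hle))).le

/-- Let `Γ` be a Fuchsian group whose stabilizer of `i ∈ ℍ` is trivial.  For every
`a ≥ √2`, within the open hyperbolic ball `B(i, log ν(a))` the partial Dirichlet domain
`Ω(Γᵃ)` agrees with the full Dirichlet domain `Ω(Γ)`. -/
theorem omega_inter_ball_eq (Γ : Subgroup (Matrix.SpecialLinearGroup (Fin 2) ℝ))
    (hdisc : DiscreteTopology Γ)
    (hstab : ∀ A ∈ Γ, A • UpperHalfPlane.I = UpperHalfPlane.I → A = 1)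
    (a : ℝ) (ha : Real.sqrt 2 ≤ a) :
    Omega Γ ∩ Metric.ball UpperHalfPlane.I (Real.log (nu a)) =
      Omega (normBdd Γ a) ∩ Metric.ball UpperHalfPlane.I (Real.log (nu a)) :=
  omega_inter_ball_eq_general Γ a ha
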